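/- arXiv:2104.14794 — 6 statements merged into one kernel-verified Lean document; each statement's English description precedes it below -/
import Mathlib

section
/- Let t1, t2, t3 be complex numbers with |t1|, |t2|, |t3| < π and t1 ≠ t2. Then the family ((−1)^{m1+m2}·b(m1, m2; m3)·t1^{m1} t2^{m2} t3^{m3}/(m1!·m2!·m3!))_{(m1,m2,m3) ∈ ℕ^3} is summable and its sum equals (β(t3 − t2) − β(t3 − t1))/(t1 − t2). -/
open Finset Complex

/-- `b(a, b; c) = a!·b!·c!·C(m−1, c)·B_m/m!` with `m = a+b+c+2`, Bernoulli numbers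
with the convention `B_1 = 1/2` (i.e. `bernoulli'`). -/
def bMT (a b c : ℕ) : ℚ :=
  (a.factorial : ℚ) * b.factorial * c.factorial * (a + b + c + 1).choose c *
    bernoulli' (a + b + c + 2) / (a + b + c + 2).factorial

/-- `β(t) = e^t/(e^t − 1) − 1/t` for `t ≠ 0`, and `β(0) = 1/2`. -/
noncomputable def betaMT (t : ℂ) : ℂ :=
  if t = 0 then 1 / 2 else Complex.exp t / (Complex.exp t - 1) - 1 / t



lemma bern_even_bound {k : ℕ} (hk : k ≠ 0) :
    |(bernoulli (2 * k) : ℝ)| / (2 * k).factorial ≤ 4 / (2 * Real.pi) ^ (2 * k) := by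
  have h := hasSum_zeta_nat hk
  set A := ((-1 : ℝ) ^ (k + 1) * 2 ^ (2 * k - 1) * Real.pi ^ (2 * k) * (bernoulli (2 * k) : ℝ) /
      (2 * k).factorial) with hA
  have hle : ∀ n : ℕ, 1 / (n : ℝ) ^ (2 * k) ≤ 1 / (n : ℝ) ^ 2 := by
    intro n
    rcases Nat.eq_zero_or_pos n with rfl | hn
    · simp [zero_pow, Nat.mul_ne_zero two_ne_zero hk]
    · apply one_div_le_one_div_of_le (by positivity)
      apply pow_le_pow_right₀ (by exact_mod_cast hn) (by omega)
  have hA2 : A ≤ Real.pi ^ 2 / 6 := hasSum_le hle h hasSum_zeta_two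
  have hA0 : 0 ≤ A := h.nonneg (fun n => by positivity)
  have h2k : (2 : ℝ) ^ (2 * k - 1) = 2 ^ (2 * k) / 2 := by
    rw [eq_div_iff (two_ne_zero' ℝ), ← pow_succ]
    congr 1; omega
  have habsA : |A| = |(bernoulli (2 * k) : ℝ)| * (2 ^ (2 * k - 1) * Real.pi ^ (2 * k) /
      (2 * k).factorial) := by
    rw [hA, _root_.abs_div, _root_.abs_mul, _root_.abs_mul, _root_.abs_mul, _root_.abs_pow,
      _root_.abs_neg, _root_.abs_one, one_pow, one_mul, _root_.abs_pow, _root_.abs_two,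
      _root_.abs_pow, _root_.abs_of_nonneg Real.pi_pos.le, Nat.abs_cast]
    ring
  rw [_root_.abs_of_nonneg hA0] at habsA
  have hfac : (0:ℝ) < (2 * k).factorial := by exact_mod_cast (2 * k).factorial_pos
  have hppos : (0:ℝ) < (2 * Real.pi) ^ (2 * k) := by positivity
  have habs : |(bernoulli (2 * k) : ℝ)| / (2 * k).factorial
      = A * 2 / (2 * Real.pi) ^ (2 * k) := by
    rw [habsA, mul_pow, h2k]
    field_simp
  rw [habs]
  gcongr
  nlinarith [Real.pi_lt_d2, Real.pi_pos]

lemma bern_bound (n : ℕ) : |(bernoulli' n : ℝ)| / n.factorial ≤ 7 / (2 * Real.pi) ^ n := by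
  have hpi := Real.pi_gt_three
  match n with
  | 0 => norm_num
  | 1 =>
    rw [bernoulli'_one]
    rw [div_le_div_iff₀ (by norm_num) (by positivity)]
    push_cast
    rw [_root_.abs_of_nonneg (by norm_num : (0:ℝ) ≤ 1/2)]
    simp [Nat.factorial]
    nlinarith [Real.pi_lt_d2]
  | (n + 2) =>
    rcases Nat.even_or_odd (n + 2) with he | ho
    · obtain ⟨k, hk⟩ := he
      have hk0 : k ≠ 0 := by omega
      have h2k : n + 2 = 2 * k := by omega
      rw [h2k, ← bernoulli_eq_bernoulli'_of_ne_one (by omega)]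
      refine (bern_even_bound hk0).trans ?_
      gcongr <;> norm_num
    · rw [bernoulli'_eq_zero_of_odd ho (by omega)]
      simp only [Rat.cast_zero, abs_zero, zero_div]
      positivity



lemma bq (n : ℕ) :
    ∑ k ∈ range n, (bernoulli' k / (k.factorial * (n - k).factorial) : ℚ)
      = n / n.factorial := by
  have h := sum_bernoulli' n
  have : ∀ k ∈ range n, (bernoulli' k / (k.factorial * (n - k).factorial) : ℚ)
      = (n.choose k : ℚ) * bernoulli' k / n.factorial := by
    intro k hk
    rw [Nat.cast_choose ℚ (mem_range.mp hk).le]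
    have h1 : (k.factorial : ℚ) ≠ 0 := by exact_mod_cast k.factorial_ne_zero
    have h2 : ((n - k).factorial : ℚ) ≠ 0 := by exact_mod_cast (n - k).factorial_ne_zero
    have h3 : (n.factorial : ℚ) ≠ 0 := by exact_mod_cast n.factorial_ne_zero
    field_simp
  rw [Finset.sum_congr rfl this, ← Finset.sum_div, h]

lemma summable_bern {t : ℂ} (ht : ‖t‖ < 2 * Real.pi) :
    Summable (fun n : ℕ => ‖((bernoulli' n : ℚ) : ℂ) / n.factorial * t ^ n‖) := by
  have hr : ‖t‖ / (2 * Real.pi) < 1 := by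
    rw [div_lt_one (by positivity)]; exact ht
  have hr0 : 0 ≤ ‖t‖ / (2 * Real.pi) := by positivity
  refine Summable.of_nonneg_of_le (fun n => norm_nonneg _) ?_
    ((summable_geometric_of_lt_one hr0 hr).mul_left 7)
  intro n
  rw [norm_mul, norm_div, norm_pow]
  have h1 : ‖((bernoulli' n : ℚ) : ℂ)‖ = |(bernoulli' n : ℝ)| := by
    rw [show ((bernoulli' n : ℚ) : ℂ) = (((bernoulli' n : ℚ) : ℝ) : ℂ) by push_cast; ring,
      Complex.norm_real, Real.norm_eq_abs]
  have h2 : ‖((n.factorial : ℕ) : ℂ)‖ = (n.factorial : ℝ) := by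
    rw [show (((n.factorial : ℕ)) : ℂ) = (((n.factorial : ℕ) : ℝ) : ℂ) by push_cast; ring,
      Complex.norm_real, Real.norm_eq_abs, Nat.abs_cast]
  rw [h1, h2]
  have := bern_bound n
  rw [div_pow]
  calc |(bernoulli' n : ℝ)| / n.factorial * ‖t‖ ^ n
      ≤ 7 / (2 * Real.pi) ^ n * ‖t‖ ^ n := by
        apply mul_le_mul_of_nonneg_right this (by positivity)
    _ = 7 * (‖t‖ ^ n / (2 * Real.pi) ^ n) := by ring

lemma hasSum_G {t : ℂ} (ht : ‖t‖ < 2 * Real.pi) (ht0 : t ≠ 0) :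
    HasSum (fun n : ℕ => ((bernoulli' n : ℚ) : ℂ) / n.factorial * t ^ n)
      (t * Complex.exp t / (Complex.exp t - 1)) := by
  set f : ℕ → ℂ := fun n => ((bernoulli' n : ℚ) : ℂ) / n.factorial * t ^ n with hf_def
  have hf := summable_bern ht
  have hfs : Summable f := hf.of_norm
  have hgnorm : Summable (fun n : ℕ => ‖t ^ n / (n.factorial : ℂ)‖) := by
    have := Real.summable_pow_div_factorial (‖t‖)
    apply this.congr
    intro n
    rw [norm_div, norm_pow]
    congr 1
    simp [Complex.norm_natCast]
  have hgs : HasSum (fun n : ℕ => t ^ n / (n.factorial : ℂ)) (Complex.exp t) := by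
    rw [Complex.exp_eq_exp_ℂ]
    exact NormedSpace.expSeries_div_hasSum_exp t
  have hexp : Complex.exp t = ∑' n : ℕ, t ^ n / (n.factorial : ℂ) := hgs.tsum_eq.symm
  -- Cauchy product
  have key : (∑' n, f n) * Complex.exp t
      = ∑' n : ℕ, ∑ kl ∈ antidiagonal n, f kl.1 * (t ^ kl.2 / (kl.2.factorial : ℂ)) := by
    rw [hexp]
    exact tsum_mul_tsum_eq_tsum_sum_antidiagonal_of_summable_norm hf hgnorm
  have inner : ∀ n : ℕ, ∑ kl ∈ antidiagonal n, f kl.1 * (t ^ kl.2 / (kl.2.factorial : ℂ))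
      = f n + (n : ℂ) * t ^ n / n.factorial := by
    intro n
    rw [Nat.sum_antidiagonal_eq_sum_range_succ_mk]
    have step : ∀ k ∈ range (n + 1),
        f k * (t ^ (n - k) / ((n - k).factorial : ℂ))
          = ((bernoulli' k / (k.factorial * (n - k).factorial) : ℚ) : ℂ) * t ^ n := by
      intro k hk
      have hkn : k ≤ n := by have := mem_range.mp hk; omega
      have : t ^ k * t ^ (n - k) = t ^ n := by
        rw [← pow_add]; congr 1; omega
      rw [hf_def]
      push_cast
      field_simp
      rw [← this]
      ring
    rw [Finset.sum_congr rfl step, ← Finset.sum_mul, Finset.sum_range_succ]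
    have hcast : ∑ k ∈ range n, ((bernoulli' k / (k.factorial * (n - k).factorial) : ℚ) : ℂ)
        = ((n : ℚ) / n.factorial : ℚ) := by
      rw [← bq n]
      push_cast
      ring
    rw [hcast]
    have : ((bernoulli' n / (n.factorial * (n - n).factorial) : ℚ) : ℂ)
        = ((bernoulli' n : ℚ) : ℂ) / n.factorial := by
      simp [Nat.sub_self, Nat.factorial]
    rw [this, hf_def]
    push_cast
    ring
  have he : HasSum (fun n : ℕ => (n : ℂ) * t ^ n / n.factorial) (t * Complex.exp t) := by
    have h1 : HasSum (fun n : ℕ => (((n + 1 : ℕ)) : ℂ) * t ^ (n + 1) / (((n + 1).factorial : ℕ) : ℂ))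
        (t * Complex.exp t) := by
      have heq : (fun n : ℕ => (((n + 1 : ℕ)) : ℂ) * t ^ (n + 1) / (((n + 1).factorial : ℕ) : ℂ))
          = fun n : ℕ => t * (t ^ n / (n.factorial : ℂ)) := by
        funext n
        have h01 : ((n : ℂ) + 1) ≠ 0 := by
          have : ((n : ℂ) + 1) = ((n + 1 : ℕ) : ℂ) := by push_cast; ring
          rw [this]
          exact_mod_cast Nat.succ_ne_zero n
        rw [Nat.factorial_succ]
        push_cast
        rw [mul_div_mul_left _ _ h01, pow_succ]
        ring
      rw [heq]
      exact hgs.mul_left t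
    have h2 := (hasSum_nat_add_iff (f := fun n : ℕ => (n : ℂ) * t ^ n / n.factorial) 1).mp h1
    simpa using h2
  have hexp1 : Complex.exp t ≠ 1 := by
    intro h
    obtain ⟨n, hn⟩ := Complex.exp_eq_one_iff.mp h
    rcases eq_or_ne n 0 with rfl | hne
    · simp at hn
      exact ht0 hn
    · rw [hn, norm_mul, norm_mul, norm_mul] at ht
      simp only [Complex.norm_intCast, Complex.norm_two, Complex.norm_real, Real.norm_eq_abs, Complex.norm_I,
        mul_one, _root_.abs_of_nonneg Real.pi_pos.le] at ht
      have h1 : (1 : ℝ) ≤ |(n : ℝ)| := by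
        have := Int.one_le_abs hne
        calc (1:ℝ) = ((1:ℤ):ℝ) := by norm_num
        _ ≤ ((|n| : ℤ) : ℝ) := by exact_mod_cast this
        _ = |(n : ℝ)| := by push_cast; ring
      nlinarith [Real.pi_pos]
  have sum_eq : (∑' n, f n) * Complex.exp t = (∑' n, f n) + t * Complex.exp t := by
    rw [key, tsum_congr inner, Summable.tsum_add hfs he.summable, he.tsum_eq]
  have hsub : Complex.exp t - 1 ≠ 0 := sub_ne_zero.mpr hexp1
  have hval : (∑' n, f n) = t * Complex.exp t / (Complex.exp t - 1) := by
    rw [eq_div_iff hsub]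
    linear_combination sum_eq
  exact hval ▸ hfs.hasSum

lemma exp_ne_one' {t : ℂ} (ht : ‖t‖ < 2 * Real.pi) (ht0 : t ≠ 0) :
    Complex.exp t ≠ 1 := by
  intro h
  obtain ⟨n, hn⟩ := Complex.exp_eq_one_iff.mp h
  rcases eq_or_ne n 0 with rfl | hne
  · simp at hn
    exact ht0 hn
  · rw [hn, norm_mul, norm_mul, norm_mul] at ht
    simp only [Complex.norm_intCast, Complex.norm_two, Complex.norm_real, Real.norm_eq_abs, Complex.norm_I,
      mul_one, _root_.abs_of_nonneg Real.pi_pos.le] at ht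
    have h1 : (1 : ℝ) ≤ |(n : ℝ)| := by
      have := Int.one_le_abs hne
      calc (1:ℝ) = ((1:ℤ):ℝ) := by norm_num
      _ ≤ ((|n| : ℤ) : ℝ) := by exact_mod_cast this
      _ = |(n : ℝ)| := by push_cast; ring
    nlinarith [Real.pi_pos]

lemma hasSum_beta {t : ℂ} (ht : ‖t‖ < 2 * Real.pi) :
    HasSum (fun n : ℕ => ((bernoulli' (n + 1) : ℚ) : ℂ) / (n + 1).factorial * t ^ n)
      (betaMT t) := by
  by_cases ht0 : t = 0
  · subst ht0
    have h := hasSum_single (f := fun n : ℕ =>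
        ((bernoulli' (n + 1) : ℚ) : ℂ) / (n + 1).factorial * (0 : ℂ) ^ n) 0
      (fun b hb => by simp [zero_pow hb])
    simp only [betaMT, if_pos rfl]
    convert h using 1
    simp [bernoulli'_one, Nat.factorial]
  · have hG := hasSum_G ht ht0
    have hsub : Complex.exp t - 1 ≠ 0 := sub_ne_zero.mpr (exp_ne_one' ht ht0)
    have h1 : HasSum (fun n : ℕ => ((bernoulli' (n + 1) : ℚ) : ℂ) / (n + 1).factorial * t ^ (n + 1))
        (t * Complex.exp t / (Complex.exp t - 1) - 1) := by
      refine (hasSum_nat_add_iff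
        (f := fun n : ℕ => ((bernoulli' n : ℚ) : ℂ) / n.factorial * t ^ n) 1).mpr ?_
      have : t * Complex.exp t / (Complex.exp t - 1) - 1
          + ∑ i ∈ range 1, ((bernoulli' i : ℚ) : ℂ) / i.factorial * t ^ i
          = t * Complex.exp t / (Complex.exp t - 1) := by
        simp [bernoulli'_zero, Nat.factorial]
      rw [this]
      exact hG
    have h2 := h1.div_const t
    have heq : (fun n : ℕ => ((bernoulli' (n + 1) : ℚ) : ℂ) / (n + 1).factorial * t ^ (n + 1) / t)
        = fun n : ℕ => ((bernoulli' (n + 1) : ℚ) : ℂ) / (n + 1).factorial * t ^ n := by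
      funext n
      rw [pow_succ, ← mul_assoc, mul_div_assoc, div_self ht0, mul_one]
    rw [heq] at h2
    have hval : (t * Complex.exp t / (Complex.exp t - 1) - 1) / t = betaMT t := by
      rw [betaMT, if_neg ht0]
      field_simp
    rwa [hval] at h2


-- grouping a summable family on ℕ × ℕ by antidiagonals
lemma hasSum_antidiagonal_of_summable {F : ℕ × ℕ → ℂ} (hF : Summable F) :
    HasSum (fun n : ℕ => ∑ kl ∈ antidiagonal n, F kl) (∑' p, F p) := by
  have h1 : HasSum (F ∘ Finset.HasAntidiagonal.sigmaAntidiagonalEquivProd) (∑' p, F p) :=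
    Finset.HasAntidiagonal.sigmaAntidiagonalEquivProd.hasSum_iff.mpr hF.hasSum
  refine h1.sigma fun n => ?_
  have h2 := hasSum_fintype (fun kl : (antidiagonal n : Finset (ℕ × ℕ)) => F kl)
  rwa [Finset.sum_coe_sort] at h2

-- the equivalence grouping ℕ³ by (a+b, c), fibers being antidiagonals in (a,b)
def e3 : (Σ sc : ℕ × ℕ, (antidiagonal sc.1 : Finset (ℕ × ℕ))) ≃ ℕ × ℕ × ℕ where
  toFun x := (x.2.1.1, x.2.1.2, x.1.2)
  invFun p := ⟨(p.1 + p.2.1, p.2.2), ⟨(p.1, p.2.1), Finset.HasAntidiagonal.mem_antidiagonal.mpr rfl⟩⟩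
  left_inv := by
    rintro ⟨⟨s, c⟩, ⟨⟨a, b⟩, h⟩⟩
    rw [Finset.HasAntidiagonal.mem_antidiagonal] at h
    subst h
    rfl
  right_inv p := rfl

lemma geom_pair (X Y : ℂ) (s : ℕ) :
    (∑ ab ∈ antidiagonal s, X ^ ab.1 * Y ^ ab.2) * (X - Y) = X ^ (s + 1) - Y ^ (s + 1) := by
  rw [Nat.sum_antidiagonal_eq_sum_range_succ_mk]
  have h := geom_sum₂_mul X Y (s + 1)
  simpa using h

lemma binom_sum (w X : ℂ) (n : ℕ) :
    ∑ k ∈ range (n + 1), ((n + 1).choose (n - k) : ℂ) * w ^ (n - k) * X ^ (k + 1)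
      = (w + X) ^ (n + 1) - w ^ (n + 1) := by
  have hrefl := Finset.sum_range_reflect
    (fun m => (w : ℂ) ^ m * X ^ (n + 1 - m) * ((n + 1).choose m : ℂ)) (n + 1)
  have key : ∑ m ∈ range (n + 2), w ^ m * X ^ (n + 1 - m) * ((n + 1).choose m : ℂ)
      = (∑ k ∈ range (n + 1), ((n + 1).choose (n - k) : ℂ) * w ^ (n - k) * X ^ (k + 1))
        + w ^ (n + 1) := by
    rw [show n + 2 = (n + 1) + 1 from rfl, Finset.sum_range_succ]
    simp only [Nat.sub_self, pow_zero, Nat.choose_self, Nat.cast_one, mul_one]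
    congr 1
    rw [← hrefl]
    refine Finset.sum_congr rfl fun k hk => ?_
    have hk' : k ≤ n := by have := mem_range.mp hk; omega
    have h1 : n + 1 - 1 - k = n - k := by omega
    have h2 : n + 1 - (n - k) = k + 1 := by omega
    rw [h1, h2]
    ring
  rw [add_pow w X (n + 1), key]
  ring

lemma SX (w X : ℂ) (n : ℕ) :
    ∑ sc ∈ antidiagonal n, ((n + 1).choose sc.2 : ℂ) * w ^ sc.2 * X ^ (sc.1 + 1)
      = (w + X) ^ (n + 1) - w ^ (n + 1) := by
  rw [Nat.sum_antidiagonal_eq_sum_range_succ_mk]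
  exact binom_sum w X n

lemma sign_split (X Y : ℂ) (a b : ℕ) :
    (-1 : ℂ) ^ (a + b) * X ^ a * Y ^ b = (-X) ^ a * (-Y) ^ b := by
  rw [neg_pow X, neg_pow Y, pow_add]
  ring

lemma choose_le_two_pow' (n c : ℕ) : ((n + 1).choose c : ℝ) ≤ 2 ^ (n + 1) := by
  have h : (n + 1).choose c ≤ 2 ^ (n + 1) := by
    rcases le_or_gt c (n + 1) with hc | hc
    · calc (n + 1).choose c ≤ ∑ i ∈ range (n + 2), (n + 1).choose i :=
        Finset.single_le_sum (fun i _ => Nat.zero_le _) (mem_range.mpr (by omega))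
      _ = 2 ^ (n + 1) := Nat.sum_range_choose (n + 1)
    · rw [Nat.choose_eq_zero_of_lt hc]; positivity
  exact_mod_cast h


set_option maxHeartbeats 2000000 in
theorem stmt2 (t1 t2 t3 : ℂ) (h1 : ‖t1‖ < Real.pi)
    (h2 : ‖t2‖ < Real.pi) (h3 : ‖t3‖ < Real.pi) (h12 : t1 ≠ t2) :
    HasSum
      (fun m : ℕ × ℕ × ℕ =>
        (-1 : ℂ) ^ (m.1 + m.2.1) * (bMT m.1 m.2.1 m.2.2 : ℂ) *
          t1 ^ m.1 * t2 ^ m.2.1 * t3 ^ m.2.2 /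
          ((m.1.factorial : ℂ) * (m.2.1.factorial : ℂ) * (m.2.2.factorial : ℂ)))
      ((betaMT (t3 - t2) - betaMT (t3 - t1)) / (t1 - t2)) := by
  have hπ := Real.pi_pos
  set F : ℕ × ℕ × ℕ → ℂ := fun m =>
    (-1 : ℂ) ^ (m.1 + m.2.1) * (bMT m.1 m.2.1 m.2.2 : ℂ) *
      t1 ^ m.1 * t2 ^ m.2.1 * t3 ^ m.2.2 /
      ((m.1.factorial : ℂ) * (m.2.1.factorial : ℂ) * (m.2.2.factorial : ℂ)) with hF_def
  have F_eq : ∀ a b c : ℕ, F (a, b, c)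
      = ((bernoulli' (a + b + c + 2) : ℚ) : ℂ) / ((a + b + c + 2).factorial : ℂ)
        * (((a + b + c + 1).choose c : ℕ) : ℂ)
        * ((-1 : ℂ) ^ (a + b) * t1 ^ a * t2 ^ b * t3 ^ c) := by
    intro a b c
    have ha : ((a.factorial : ℕ) : ℂ) ≠ 0 := by exact_mod_cast a.factorial_ne_zero
    have hb : ((b.factorial : ℕ) : ℂ) ≠ 0 := by exact_mod_cast b.factorial_ne_zero
    have hc : ((c.factorial : ℕ) : ℂ) ≠ 0 := by exact_mod_cast c.factorial_ne_zero
    have hm : (((a + b + c + 2).factorial : ℕ) : ℂ) ≠ 0 := by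
      exact_mod_cast (a + b + c + 2).factorial_ne_zero
    simp only [hF_def, bMT]
    push_cast
    field_simp
  -- norm bound
  have hFnorm : ∀ p : ℕ × ℕ × ℕ, ‖F p‖ ≤ (7 / (2 * Real.pi ^ 2)) *
      ((‖t1‖ / Real.pi) ^ p.1 * ((‖t2‖ / Real.pi) ^ p.2.1 *
        (‖t3‖ / Real.pi) ^ p.2.2)) := by
    rintro ⟨a, b, c⟩
    rw [F_eq a b c]
    have hnorm : ‖((bernoulli' (a + b + c + 2) : ℚ) : ℂ) / ((a + b + c + 2).factorial : ℂ)
        * (((a + b + c + 1).choose c : ℕ) : ℂ)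
        * ((-1 : ℂ) ^ (a + b) * t1 ^ a * t2 ^ b * t3 ^ c)‖
        = |(bernoulli' (a + b + c + 2) : ℝ)| / ((a + b + c + 2).factorial : ℝ)
          * (((a + b + c + 1).choose c : ℕ) : ℝ)
          * (‖t1‖ ^ a * ‖t2‖ ^ b * ‖t3‖ ^ c) := by
      rw [norm_mul, norm_mul, norm_mul, norm_mul, norm_mul, norm_div, norm_pow, norm_pow,
        norm_pow, norm_pow, norm_neg, norm_one, one_pow, one_mul]
      simp only [Complex.norm_natCast]
      congr 2
      rw [show ((bernoulli' (a + b + c + 2) : ℚ) : ℂ)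
          = (((bernoulli' (a + b + c + 2) : ℚ) : ℝ) : ℂ) by push_cast; ring,
        Complex.norm_real, Real.norm_eq_abs]
    rw [hnorm]
    have hb1 := bern_bound (a + b + c + 2)
    have hb2 := choose_le_two_pow' (a + b + c) c
    have hfinal : 7 / (2 * Real.pi) ^ (a + b + c + 2) * (2 : ℝ) ^ (a + b + c + 1)
        * (‖t1‖ ^ a * ‖t2‖ ^ b * ‖t3‖ ^ c)
        = (7 / (2 * Real.pi ^ 2)) * ((‖t1‖ / Real.pi) ^ a *
          ((‖t2‖ / Real.pi) ^ b * (‖t3‖ / Real.pi) ^ c)) := by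
      have hsplit : (2 * Real.pi) ^ (a + b + c + 2)
          = ((2 : ℝ) ^ (a + b + c + 1) * 2) *
            (Real.pi ^ 2 * (Real.pi ^ a * Real.pi ^ b * Real.pi ^ c)) := by
        rw [mul_pow]
        rw [show a + b + c + 2 = (a + b + c + 1) + 1 from rfl, pow_succ (2:ℝ)]
        rw [show (a + b + c + 1) + 1 = (a + b + c) + 2 from rfl,
          pow_add Real.pi (a + b + c) 2, pow_add Real.pi (a + b) c, pow_add Real.pi a b]
        ring
      rw [hsplit, div_pow, div_pow, div_pow]
      have h2ne : (2:ℝ) ^ (a+b+c+1) ≠ 0 := by positivity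
      have hπa : Real.pi ^ a ≠ 0 := by positivity
      have hπb : Real.pi ^ b ≠ 0 := by positivity
      have hπc : Real.pi ^ c ≠ 0 := by positivity
      field_simp
    rw [← hfinal]
    have hprod : (0:ℝ) ≤ ‖t1‖ ^ a * ‖t2‖ ^ b * ‖t3‖ ^ c := by
      positivity
    apply mul_le_mul_of_nonneg_right ?_ hprod
    apply mul_le_mul (le_of_eq ?_ |>.trans (hb1.trans (le_refl _)) |>.trans (le_refl _)) hb2
      (by positivity) (by positivity)
    rfl
    -- summability
  have hx1 : ‖t1‖ / Real.pi < 1 := (div_lt_one hπ).mpr h1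
  have hy1 : ‖t2‖ / Real.pi < 1 := (div_lt_one hπ).mpr h2
  have hz1 : ‖t3‖ / Real.pi < 1 := (div_lt_one hπ).mpr h3
  have hg : Summable (fun p : ℕ × ℕ × ℕ => (7 / (2 * Real.pi ^ 2)) *
      ((‖t1‖ / Real.pi) ^ p.1 * ((‖t2‖ / Real.pi) ^ p.2.1 *
        (‖t3‖ / Real.pi) ^ p.2.2))) := by
    apply Summable.mul_left
    have s23 : Summable (fun q : ℕ × ℕ => (‖t2‖ / Real.pi) ^ q.1 *
        (‖t3‖ / Real.pi) ^ q.2) :=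
      Summable.mul_of_nonneg (summable_geometric_of_lt_one (by positivity) hy1)
        (summable_geometric_of_lt_one (by positivity) hz1)
        (by intro n; positivity) (by intro n; positivity)
    exact Summable.mul_of_nonneg (summable_geometric_of_lt_one (by positivity) hx1) s23
      (by intro n; positivity) (by intro q; positivity)
  have hFs : Summable F := Summable.of_norm_bounded hg hFnorm
  -- grouping
  have hFhs : HasSum F (∑' p, F p) := hFs.hasSum
  have h1' : HasSum (F ∘ e3) (∑' p, F p) := e3.hasSum_iff.mpr hFhs
  have h2' : HasSum (fun sc : ℕ × ℕ => ∑ ab ∈ antidiagonal sc.1, F (ab.1, ab.2, sc.2))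
      (∑' p, F p) := by
    refine h1'.sigma fun sc => ?_
    have h0 := hasSum_fintype (fun ab : (antidiagonal sc.1 : Finset (ℕ × ℕ)) =>
      F ((ab : ℕ × ℕ).1, (ab : ℕ × ℕ).2, sc.2))
    rw [Finset.sum_coe_sort (antidiagonal sc.1) (fun ab => F (ab.1, ab.2, sc.2))] at h0
    exact h0
  have h3' : HasSum (fun n : ℕ => ∑ sc ∈ antidiagonal n, ∑ ab ∈ antidiagonal sc.1,
      F (ab.1, ab.2, sc.2)) (∑' p, F p) := by
    have := hasSum_antidiagonal_of_summable h2'.summable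
    rwa [h2'.tsum_eq] at this
  -- beta series at u := t3 - t1, v := t3 - t2
  have hu2 : ‖t3 - t1‖ < 2 * Real.pi := by
    calc ‖t3 - t1‖ ≤ ‖t3‖ + ‖t1‖ := by
          simpa using norm_sub_le t3 t1
    _ < 2 * Real.pi := by linarith
  have hv2 : ‖t3 - t2‖ < 2 * Real.pi := by
    calc ‖t3 - t2‖ ≤ ‖t3‖ + ‖t2‖ := by
          simpa using norm_sub_le t3 t2
    _ < 2 * Real.pi := by linarith
  have hbu := hasSum_beta hu2
  have hbv := hasSum_beta hv2
  set f0 : ℕ → ℂ := fun k => ((bernoulli' (k + 1) : ℚ) : ℂ) / (k + 1).factorial * (t3 - t1) ^ k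
      - ((bernoulli' (k + 1) : ℚ) : ℂ) / (k + 1).factorial * (t3 - t2) ^ k with hf0
  have hsum0 : HasSum f0 (betaMT (t3 - t1) - betaMT (t3 - t2)) := hbu.sub hbv
  have h4 : HasSum (fun n => f0 (n + 1)) (betaMT (t3 - t1) - betaMT (t3 - t2)) := by
    refine (hasSum_nat_add_iff 1).mpr ?_
    have heq0 : betaMT (t3 - t1) - betaMT (t3 - t2) + ∑ i ∈ range 1, f0 i
        = betaMT (t3 - t1) - betaMT (t3 - t2) := by
      simp [hf0]
    rw [heq0]
    exact hsum0
  have hfun4 : (fun n : ℕ => f0 (n + 1)) = fun n : ℕ =>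
      ((bernoulli' (n + 2) : ℚ) : ℂ) / ((n + 2).factorial : ℂ)
        * ((t3 - t1) ^ (n + 1) - (t3 - t2) ^ (n + 1)) := by
    funext n
    simp only [hf0]
    rw [show n + 1 + 1 = n + 2 from rfl]
    ring
  rw [hfun4] at h4
  have h21 : t2 - t1 ≠ 0 := sub_ne_zero.mpr (Ne.symm h12)
  have hdiv := h4.div_const (t2 - t1)
  -- evaluate the diagonal sums
  have hQ : ∀ n : ℕ, ∑ sc ∈ antidiagonal n, ∑ ab ∈ antidiagonal sc.1, F (ab.1, ab.2, sc.2)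
      = ((bernoulli' (n + 2) : ℚ) : ℂ) / ((n + 2).factorial : ℂ)
        * ((t3 - t1) ^ (n + 1) - (t3 - t2) ^ (n + 1)) / (t2 - t1) := by
    intro n
    rw [eq_div_iff h21]
    have step1 : ∀ sc ∈ antidiagonal n, ∑ ab ∈ antidiagonal sc.1, F (ab.1, ab.2, sc.2)
        = ((bernoulli' (n + 2) : ℚ) : ℂ) / ((n + 2).factorial : ℂ)
          * (((n + 1).choose sc.2 : ℕ) : ℂ) * t3 ^ sc.2
          * ∑ ab ∈ antidiagonal sc.1, (-t1) ^ ab.1 * (-t2) ^ ab.2 := by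
      intro sc hsc
      have hn : sc.1 + sc.2 = n := Finset.HasAntidiagonal.mem_antidiagonal.mp hsc
      rw [Finset.mul_sum]
      refine Finset.sum_congr rfl fun ab hab => ?_
      have hs : ab.1 + ab.2 = sc.1 := Finset.HasAntidiagonal.mem_antidiagonal.mp hab
      rw [F_eq ab.1 ab.2 sc.2]
      rw [show ab.1 + ab.2 + sc.2 + 2 = n + 2 by omega,
        show ab.1 + ab.2 + sc.2 + 1 = n + 1 by omega]
      rw [← sign_split t1 t2 ab.1 ab.2]
      ring
    rw [Finset.sum_congr rfl step1, Finset.sum_mul]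
    have step2 : ∀ sc ∈ antidiagonal n,
        (((bernoulli' (n + 2) : ℚ) : ℂ) / ((n + 2).factorial : ℂ)
          * (((n + 1).choose sc.2 : ℕ) : ℂ) * t3 ^ sc.2
          * ∑ ab ∈ antidiagonal sc.1, (-t1) ^ ab.1 * (-t2) ^ ab.2) * (t2 - t1)
        = ((bernoulli' (n + 2) : ℚ) : ℂ) / ((n + 2).factorial : ℂ)
          * ((((n + 1).choose sc.2 : ℕ) : ℂ) * t3 ^ sc.2 * (-t1) ^ (sc.1 + 1)
            - (((n + 1).choose sc.2 : ℕ) : ℂ) * t3 ^ sc.2 * (-t2) ^ (sc.1 + 1)) := by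
      intro sc _
      have hg2 := geom_pair (-t1) (-t2) sc.1
      rw [show (-t1) - (-t2) = t2 - t1 by ring] at hg2
      linear_combination (((bernoulli' (n + 2) : ℚ) : ℂ) / ((n + 2).factorial : ℂ)
        * (((n + 1).choose sc.2 : ℕ) : ℂ) * t3 ^ sc.2) * hg2
    rw [Finset.sum_congr rfl step2, ← Finset.mul_sum, Finset.sum_sub_distrib]
    rw [SX t3 (-t1) n, SX t3 (-t2) n]
    rw [show t3 + -t1 = t3 - t1 by ring, show t3 + -t2 = t3 - t2 by ring]
    ring
  have hfunQ : (fun n : ℕ => ∑ sc ∈ antidiagonal n, ∑ ab ∈ antidiagonal sc.1,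
      F (ab.1, ab.2, sc.2))
      = fun n : ℕ => ((bernoulli' (n + 2) : ℚ) : ℂ) / ((n + 2).factorial : ℂ)
        * ((t3 - t1) ^ (n + 1) - (t3 - t2) ^ (n + 1)) / (t2 - t1) := funext hQ
  rw [hfunQ] at h3'
  have htsum : (∑' p, F p) = (betaMT (t3 - t1) - betaMT (t3 - t2)) / (t2 - t1) :=
    h3'.unique hdiv
  have htarget : (betaMT (t3 - t2) - betaMT (t3 - t1)) / (t1 - t2)
      = (betaMT (t3 - t1) - betaMT (t3 - t2)) / (t2 - t1) := by
    rw [show betaMT (t3 - t2) - betaMT (t3 - t1)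
        = -(betaMT (t3 - t1) - betaMT (t3 - t2)) by ring,
      show t1 - t2 = -(t2 - t1) by ring, neg_div_neg_eq]
  rw [htarget, ← htsum]
  exact hFhs
end

section
/- Let p be a prime and let a1, a2, a3 be non-negative integers. Then in ℤ/pℤ the following congruence holds: ∑_{n1,n2,n3 ≥ 1, n1+n2+n3 = p} n1^{a1}·n2^{a2}·n3^{a3} = (−1)^{a2+a3} · ∑_{l=0}^{a2} (−1)^l · C(a2, l) · ∑_{1 ≤ m1 < m2 ≤ p−1} m1^{a1+a2−l}·m2^{a3+l}, where all terms are reduced modulo p and C(·,·) is the binomial coefficient. -/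
open Finset

theorem stmt4 (p : ℕ) (hp : p.Prime) (a1 a2 a3 : ℕ) :
    (∑ n1 ∈ Finset.Ico 1 p, ∑ n2 ∈ Finset.Ico 1 (p - n1),
        (n1 : ZMod p) ^ a1 * (n2 : ZMod p) ^ a2 * ((p - n1 - n2 : ℕ) : ZMod p) ^ a3) =
      (-1 : ZMod p) ^ (a2 + a3) *
        ∑ l ∈ Finset.range (a2 + 1), (-1 : ZMod p) ^ l * (a2.choose l : ZMod p) *
          ∑ m2 ∈ Finset.range p, ∑ m1 ∈ Finset.Ico 1 m2,
            (m1 : ZMod p) ^ (a1 + a2 - l) * (m2 : ZMod p) ^ (a3 + l) := by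
  have key : ∀ m1 m2 : ℕ, m1 < m2 →
      (m1 : ZMod p) ^ a1 * ((m2 - m1 : ℕ) : ZMod p) ^ a2 * (-(m2 : ZMod p)) ^ a3 =
      (-1 : ZMod p) ^ (a2 + a3) *
        ∑ l ∈ Finset.range (a2 + 1), (-1 : ZMod p) ^ l * (a2.choose l : ZMod p) *
          ((m1 : ZMod p) ^ (a1 + a2 - l) * (m2 : ZMod p) ^ (a3 + l)) := by
    intro m1 m2 h
    rw [Nat.cast_sub h.le, sub_pow, Finset.mul_sum, Finset.mul_sum, Finset.sum_mul]
    apply Finset.sum_congr rfl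
    intro l hl
    rw [Finset.mem_range] at hl
    obtain ⟨k, rfl⟩ : ∃ k, a2 = l + k := ⟨a2 - l, by omega⟩
    have h1 : l + k - l = k := by omega
    have h2 : a1 + (l + k) - l = a1 + k := by omega
    rw [h1, h2]
    have hs1 : (-1 : ZMod p) ^ (l + (l + k)) = (-1) ^ k := by
      rw [show l + (l + k) = k + 2 * l by omega, pow_add, pow_mul]
      simp
    have hs2 : (-1 : ZMod p) ^ (l + k + a3) * (-1) ^ l =
        (-1) ^ k * (-1) ^ a3 := by
      rw [show l + k + a3 = k + a3 + l by omega, pow_add, mul_assoc,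
        ← pow_add, ← two_mul, pow_mul]
      simp [pow_add]
    rw [hs1, neg_pow (m2 : ZMod p)]
    calc (m1 : ZMod p) ^ a1 * ((-1) ^ k * (m2 : ZMod p) ^ l * (m1 : ZMod p) ^ k *
            ((l + k).choose l : ZMod p)) * ((-1) ^ a3 * (m2 : ZMod p) ^ a3)
        = ((-1 : ZMod p) ^ k * (-1) ^ a3) * (((l + k).choose l : ZMod p) *
            ((m1 : ZMod p) ^ (a1 + k) * (m2 : ZMod p) ^ (a3 + l))) := by
          rw [pow_add, pow_add]; ring
      _ = _ := by rw [← hs2]; ring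
  have step1 :
      (∑ n1 ∈ Finset.Ico 1 p, ∑ n2 ∈ Finset.Ico 1 (p - n1),
          (n1 : ZMod p) ^ a1 * (n2 : ZMod p) ^ a2 * ((p - n1 - n2 : ℕ) : ZMod p) ^ a3) =
      ∑ m2 ∈ Finset.range p, ∑ m1 ∈ Finset.Ico 1 m2,
          (m1 : ZMod p) ^ a1 * ((m2 - m1 : ℕ) : ZMod p) ^ a2 * (-(m2 : ZMod p)) ^ a3 := by
    rw [Finset.sum_sigma', Finset.sum_sigma']
    apply Finset.sum_nbij' (i := fun x => ⟨x.1 + x.2, x.1⟩)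
      (j := fun y => ⟨y.2, y.1 - y.2⟩)
    · intro a ha
      simp only [Finset.mem_sigma, Finset.mem_Ico, Finset.mem_range] at ha ⊢
      omega
    · intro a ha
      simp only [Finset.mem_sigma, Finset.mem_Ico, Finset.mem_range] at ha ⊢
      omega
    · intro a ha
      obtain ⟨x, y⟩ := a
      simp only [Finset.mem_sigma, Finset.mem_Ico] at ha
      have : x + y - x = y := by omega
      rw [this]
    · intro a ha
      obtain ⟨x, y⟩ := a
      simp only [Finset.mem_sigma, Finset.mem_Ico, Finset.mem_range] at ha
      have : y + (x - y) = x := by omega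
      rw [this]
    · intro a ha
      simp only [Finset.mem_sigma, Finset.mem_Ico] at ha
      obtain ⟨⟨h1, h2⟩, h3, h4⟩ := ha
      have e1 : a.1 + a.2 - a.1 = a.2 := by omega
      have e2 : ((p - a.1 - a.2 : ℕ) : ZMod p) = -((a.1 + a.2 : ℕ) : ZMod p) := by
        have : p - a.1 - a.2 = p - (a.1 + a.2) := by omega
        rw [this, Nat.cast_sub (by omega), CharP.cast_eq_zero]
        ring
      simp only [e1, e2]
  rw [step1]
  simp_rw [Finset.mul_sum]
  rw [Finset.sum_comm]
  apply Finset.sum_congr rfl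
  intro m2 hm2
  rw [Finset.sum_comm]
  apply Finset.sum_congr rfl
  intro m1 hm1
  rw [Finset.mem_Ico] at hm1
  rw [key m1 m2 hm1.2, Finset.mul_sum]
end

section
/- Let a1, a2, a3 be non-negative integers with (a1, a2, a3) ≠ (0, 0, 0). Then for all but finitely many primes p, we have ∑_{n1,n2,n3 ≥ 1, n1+n2+n3 = p} n1^{a1}·n2^{a2}·n3^{a3} ≡ 0 (mod p). -/
open Finset

section aux
variable (p : ℕ) [hp : Fact p.Prime]

private lemma sum_range_univ (f : ZMod p → ZMod p) :
    ∑ i ∈ range p, f (i : ZMod p) = ∑ x : ZMod p, f x := by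
  haveI : NeZero p := ⟨hp.out.ne_zero⟩
  refine Finset.sum_nbij' (fun n => ((n : ℕ) : ZMod p)) (fun x => x.val) ?_ ?_ ?_ ?_ ?_
  · intros; exact mem_univ _
  · intro x _; rw [mem_range]; exact ZMod.val_lt x
  · intro a ha; rw [mem_range] at ha; exact ZMod.val_cast_of_lt ha
  · intro x _; exact ZMod.natCast_rightInverse x
  · intros; rfl

private lemma sigma_eq (m : ℕ) (hm : m < p - 1) :
    ∑ x ∈ Ico 1 p, (x : ZMod p) ^ m = if m = 0 then -1 else 0 := by
  have hp0 : 0 < p := hp.out.pos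
  have h1 : ∑ i ∈ range p, (i : ZMod p) ^ m
      = ((0:ℕ) : ZMod p)^m + ∑ x ∈ Ico 1 p, (x : ZMod p) ^ m := by
    rw [range_eq_Ico, sum_eq_sum_Ico_succ_bot hp0]
  have h2 : ∑ i ∈ range p, (i : ZMod p) ^ m = 0 := by
    rw [sum_range_univ p (fun x => x ^ m)]
    apply FiniteField.sum_pow_lt_card_sub_one
    rwa [ZMod.card]
  rw [h2] at h1
  have h3 : ∑ x ∈ Ico 1 p, (x:ZMod p)^m = -(((0:ℕ):ZMod p)^m) := by
    linear_combination -h1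
  rw [h3]
  split_ifs with hm0
  · subst hm0; norm_num
  · rw [Nat.cast_zero, zero_pow hm0, neg_zero]


variable (p : ℕ) [hp : Fact p.Prime]

private def Zs (b c : ℕ) : ZMod p :=
  ∑ x ∈ Ico 1 p, ∑ y ∈ Ico (x+1) p, (x : ZMod p) ^ b * (y : ZMod p) ^ c

private lemma binom_id (c : ℕ) (Y : ZMod p) :
    ∑ k ∈ range (c+1), (-1 : ZMod p)^(k+c) * ((c+1).choose k : ℕ) * Y^k
      = Y^(c+1) - (Y - 1)^(c+1) := by
  rw [sub_pow, sum_range_succ _ (c+1)]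
  have h1 : (-1 : ZMod p)^((c+1)+(c+1)) = 1 := Even.neg_one_pow ⟨c+1, rfl⟩
  rw [h1]
  simp only [Nat.choose_self, Nat.cast_one, mul_one, one_mul, one_pow, Nat.sub_self, pow_zero]
  have h2 : ∀ A : ZMod p, Y^(c+1) - (A + Y^(c+1)) = -A := fun A => by ring
  rw [h2, ← Finset.sum_neg_distrib]
  apply sum_congr rfl
  intro k hk
  have hkc : k + (c+1) = (k+c)+1 := by omega
  rw [hkc, pow_succ]
  ring

private lemma tele (c x : ℕ) (hxp : x < p) :
    ∑ y ∈ Ico (x+1) p, ((y : ZMod p)^(c+1) - ((y : ZMod p) - 1)^(c+1))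
      = (-1 : ZMod p)^(c+1) - (x : ZMod p)^(c+1) := by
  rw [sum_Ico_eq_sum_range]
  have key : ∀ i ∈ range (p - (x+1)),
      (((x+1+i : ℕ) : ZMod p)^(c+1) - (((x+1+i : ℕ) : ZMod p) - 1)^(c+1))
      = (fun j => ((x+j : ℕ) : ZMod p)^(c+1)) (i+1) - (fun j => ((x+j : ℕ) : ZMod p)^(c+1)) i := by
    intro i _
    simp only []
    have e1 : x + 1 + i = x + (i+1) := by omega
    have e2 : ((x + 1 + i : ℕ) : ZMod p) - 1 = ((x + i : ℕ) : ZMod p) := by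
      push_cast; ring
    rw [e2, e1]
  rw [sum_congr rfl key, Finset.sum_range_sub (fun j => ((x+j : ℕ) : ZMod p)^(c+1))]
  have e3 : x + (p - (x+1)) = p - 1 := by omega
  have e4 : ((p - 1 : ℕ) : ZMod p) = -1 := by
    rw [Nat.cast_sub hp.out.one_lt.le, ZMod.natCast_self, Nat.cast_one, zero_sub]
  rw [e3, e4]
  simp

end aux

section aux2
variable (p : ℕ) [hp : Fact p.Prime]

private lemma step (b c : ℕ) :
    ∑ k ∈ range (c+1), (-1 : ZMod p)^(k+c) * ((c+1).choose k : ℕ) * Zs p b k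
      = (-1:ZMod p)^(c+1) * (∑ x ∈ Ico 1 p, (x:ZMod p)^b)
        - ∑ x ∈ Ico 1 p, (x:ZMod p)^(b+(c+1)) := by
  unfold Zs
  simp only [Finset.mul_sum]
  rw [Finset.sum_comm]
  have hx : ∀ x ∈ Ico 1 p,
      (∑ k ∈ range (c+1), ∑ y ∈ Ico (x+1) p,
        (-1 : ZMod p)^(k+c) * ((c+1).choose k : ℕ) * ((x : ZMod p) ^ b * (y : ZMod p) ^ k))
      = (-1:ZMod p)^(c+1) * (x:ZMod p)^b - (x:ZMod p)^(b+(c+1)) := by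
    intro x hx
    rw [mem_Ico] at hx
    rw [Finset.sum_comm]
    have hy : ∀ y ∈ Ico (x+1) p,
        (∑ k ∈ range (c+1), (-1 : ZMod p)^(k+c) * ((c+1).choose k : ℕ)
            * ((x : ZMod p) ^ b * (y : ZMod p) ^ k))
        = (x:ZMod p)^b * ((y : ZMod p)^(c+1) - ((y : ZMod p) - 1)^(c+1)) := by
      intro y _
      rw [← binom_id p c (y : ZMod p), Finset.mul_sum]
      apply sum_congr rfl
      intro k _
      ring
    rw [sum_congr rfl hy, ← Finset.mul_sum, tele p c x hx.2]
    rw [pow_add]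
    ring
  rw [sum_congr rfl hx, Finset.sum_sub_distrib, ← Finset.mul_sum]

end aux2

section aux3
variable (p : ℕ) [hp : Fact p.Prime]

private lemma Z00 (hp4 : 4 ≤ p) : Zs p 0 0 = 1 := by
  unfold Zs
  have hx : ∀ x ∈ Ico 1 p,
      (∑ y ∈ Ico (x+1) p, (x : ZMod p) ^ 0 * (y : ZMod p) ^ 0)
        = -((x : ZMod p)^1) - (x:ZMod p)^0 := by
    intro x hx
    rw [mem_Ico] at hx
    simp only [pow_zero, mul_one, sum_const, Nat.card_Ico, nsmul_eq_mul, Nat.cast_sub hx.2]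
    push_cast
    rw [ZMod.natCast_self]
    ring
  rw [sum_congr rfl hx, Finset.sum_sub_distrib, Finset.sum_neg_distrib]
  rw [sigma_eq p 1 (by omega), sigma_eq p 0 (by omega)]
  norm_num

private lemma Zzero : ∀ c b : ℕ, 1 ≤ b + c → b + c + 3 ≤ p → Zs p b c = 0 := by
  intro c
  induction c using Nat.strong_induction_on with
  | _ c ih =>
    intro b hbc hp3
    have hstep := step p b c
    rw [sum_range_succ] at hstep
    have hcoef : (-1 : ZMod p)^(c+c) = 1 := Even.neg_one_pow ⟨c, rfl⟩
    rw [hcoef, one_mul, Nat.choose_succ_self_right] at hstep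
    have hne : ((c+1 : ℕ) : ZMod p) ≠ 0 := by
      intro hc
      rw [ZMod.natCast_eq_zero_iff] at hc
      have := Nat.le_of_dvd (by omega) hc
      omega
    rcases Nat.eq_zero_or_pos b with hb | hb
    · subst hb
      have hc1 : 1 ≤ c := by omega
      have hsum : ∑ k ∈ range c, (-1 : ZMod p)^(k+c) * ((c+1).choose k : ℕ) * Zs p 0 k
          = (-1:ZMod p)^c := by
        rw [Finset.sum_eq_single 0]
        · rw [Z00 p (by omega)]
          simp
        · intro k hk hk0
          have hkc := mem_range.mp hk
          rw [ih k hkc 0 (by omega) (by omega)]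
          ring
        · intro h0; exact absurd (mem_range.mpr (by omega)) h0
      rw [hsum, sigma_eq p 0 (by omega), sigma_eq p (0 + (c+1)) (by omega)] at hstep
      simp only [if_pos rfl, if_neg (by omega : ¬ (0 + (c+1) = 0)), if_true] at hstep
      have h2 : ((c+1:ℕ) : ZMod p) * Zs p 0 c = 0 := by
        have e : ((-1:ZMod p))^(c+1) = (-1:ZMod p)^c * (-1) := pow_succ _ _
        rw [e] at hstep
        linear_combination hstep
      rcases mul_eq_zero.mp h2 with h | h
      · exact absurd h hne
      · exact h
    · have hsum : ∑ k ∈ range c, (-1 : ZMod p)^(k+c) * ((c+1).choose k : ℕ) * Zs p b k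
          = 0 := by
        apply Finset.sum_eq_zero
        intro k hk
        have hkc := mem_range.mp hk
        rw [ih k hkc b (by omega) (by omega)]
        ring
      rw [hsum, sigma_eq p b (by omega), sigma_eq p (b + (c+1)) (by omega)] at hstep
      simp only [if_neg (by omega : ¬ b = 0), if_neg (by omega : ¬ (b + (c+1) = 0))] at hstep
      have h2 : ((c+1:ℕ) : ZMod p) * Zs p b c = 0 := by linear_combination hstep
      rcases mul_eq_zero.mp h2 with h | h
      · exact absurd h hne
      · exact h

end aux3

section aux4
variable (p : ℕ) [hp : Fact p.Prime]

private lemma main_vanish (a1 a2 a3 : ℕ) (hw : 1 ≤ a1+a2+a3) (hp3 : a1+a2+a3+3 ≤ p) :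
    (∑ n1 ∈ Finset.Ico 1 p, ∑ n2 ∈ Finset.Ico 1 (p - n1),
      (n1 : ZMod p) ^ a1 * (n2 : ZMod p) ^ a2 * ((p - n1 - n2 : ℕ) : ZMod p) ^ a3) = 0 := by
  have stepA : ∀ x ∈ Ico 1 p,
      (∑ n2 ∈ Finset.Ico 1 (p - x),
        (x : ZMod p) ^ a1 * (n2 : ZMod p) ^ a2 * ((p - x - n2 : ℕ) : ZMod p) ^ a3)
      = ∑ y ∈ Ico (x+1) p,
          (x : ZMod p) ^ a1 * ((y : ZMod p) - (x : ZMod p)) ^ a2 * (-(y : ZMod p)) ^ a3 := by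
    intro x hx
    rw [mem_Ico] at hx
    have hmap : Ico (x+1) p = (Ico 1 (p - x)).map (addLeftEmbedding x) := by
      rw [map_add_left_Ico]
      congr 1 ; omega
    rw [hmap, Finset.sum_map]
    apply sum_congr rfl
    intro n2 hn2
    rw [mem_Ico] at hn2
    have he : addLeftEmbedding x n2 = x + n2 := rfl
    rw [he]
    have e1 : ((x + n2 : ℕ) : ZMod p) - (x : ZMod p) = (n2 : ZMod p) := by
      push_cast; ring
    have e2 : ((p - x - n2 : ℕ) : ZMod p) = -((x + n2 : ℕ) : ZMod p) := by
      have hle : x + n2 ≤ p := by omega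
      have : p - x - n2 = p - (x + n2) := by omega
      rw [this, Nat.cast_sub hle, ZMod.natCast_self, zero_sub]
    rw [e1, e2]
  rw [sum_congr rfl stepA]
  have expand : ∀ x ∈ Ico 1 p, ∀ y ∈ Ico (x+1) p,
      (x:ZMod p)^a1 * ((y:ZMod p) - (x:ZMod p))^a2 * (-(y:ZMod p))^a3
        = ∑ m ∈ range (a2+1), ((-1:ZMod p)^(m+a2+a3) * ((a2.choose m : ℕ) : ZMod p))
            * ((x:ZMod p)^(a1+(a2-m)) * (y:ZMod p)^(m+a3)) := by
    intro x _ y _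
    rw [sub_pow, neg_pow, Finset.mul_sum, Finset.sum_mul]
    apply sum_congr rfl
    intro m hm
    rw [mem_range] at hm
    have em : m + a2 + a3 = (m + a2) + a3 := rfl
    rw [em, pow_add ((-1:ZMod p)) (m+a2) a3, pow_add ((x:ZMod p)) a1 (a2-m),
      pow_add ((y:ZMod p)) m a3]
    ring
  have hswap : (∑ x ∈ Ico 1 p, ∑ y ∈ Ico (x+1) p,
      (x:ZMod p)^a1 * ((y:ZMod p) - (x:ZMod p))^a2 * (-(y:ZMod p))^a3)
      = ∑ m ∈ range (a2+1), ((-1:ZMod p)^(m+a2+a3) * ((a2.choose m : ℕ) : ZMod p))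
          * Zs p (a1+(a2-m)) (m+a3) := by
    rw [sum_congr rfl (fun x hx => sum_congr rfl (fun y hy => expand x hx y hy))]
    rw [sum_congr rfl (fun x _ => Finset.sum_comm), Finset.sum_comm]
    apply sum_congr rfl
    intro m _
    unfold Zs
    simp only [Finset.mul_sum]
  rw [hswap]
  apply Finset.sum_eq_zero
  intro m hm
  rw [mem_range] at hm
  rw [Zzero p (m+a3) (a1+(a2-m)) (by omega) (by omega)]
  ring

end aux4

theorem stmt5 (a1 a2 a3 : ℕ) (h : (a1, a2, a3) ≠ (0, 0, 0)) :
    {p : ℕ | p.Prime ∧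
      (∑ n1 ∈ Finset.Ico 1 p, ∑ n2 ∈ Finset.Ico 1 (p - n1),
        (n1 : ZMod p) ^ a1 * (n2 : ZMod p) ^ a2 * ((p - n1 - n2 : ℕ) : ZMod p) ^ a3) ≠ 0}.Finite := by
  have hw : 1 ≤ a1 + a2 + a3 := by
    rcases Nat.eq_zero_or_pos (a1+a2+a3) with h0 | h0
    · exfalso; apply h
      have : a1 = 0 ∧ a2 = 0 ∧ a3 = 0 := by omega
      simp [this.1, this.2.1, this.2.2]
    · exact h0
  apply Set.Finite.subset (Set.finite_Iio (a1+a2+a3+3))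
  intro p hpmem
  simp only [Set.mem_setOf_eq] at hpmem
  obtain ⟨hpp, hne⟩ := hpmem
  rw [Set.mem_Iio]
  by_contra hge
  push_neg at hge
  haveI : Fact p.Prime := ⟨hpp⟩
  exact hne (main_vanish p a1 a2 a3 hw hge)
end

section
/- Let m1, m2, m3 be non-negative integers, set m = m1+m2+m3+2, and let c1, c2, c3 be nonzero complex numbers with c2 + c3 ≠ 0. Then as ε → 0 through nonzero complex numbers, the function ε ↦ Γ(−m2−m3−1 + (c2+c3)ε) · Γ(1+m2 − c2 ε) · (1/Γ(−m3 + c3 ε)) · ζ(1−m + (c1+c2+c3)ε) tends to the limit (−1)^{m2}·b(m2, m3; m1)·c3/(c2+c3), where Γ is the complex Gamma function and ζ is the (analytically continued) Riemann zeta function. -/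
open Finset Complex Filter

open Topology

lemma tendsto_affine_punctured (a c : ℂ) (hc : c ≠ 0) (b : ℂ) :
    Tendsto (fun z : ℂ => b + c * z) (𝓝[≠] a) (𝓝[≠] (b + c * a)) := by
  refine tendsto_nhdsWithin_of_tendsto_nhds_of_eventually_within _ ?_ ?_
  · exact (Continuous.tendsto (by continuity) a).mono_left nhdsWithin_le_nhds
  · filter_upwards [self_mem_nhdsWithin] with z hz
    simp only [Set.mem_compl_iff, Set.mem_singleton_iff] at hz ⊢
    intro h
    exact hz (mul_left_cancel₀ hc (add_left_cancel h))

lemma gammaRes (n : ℕ) :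
    Tendsto (fun z : ℂ => (z + n) * Complex.Gamma z) (𝓝[≠] (-(n : ℂ)))
      (𝓝 ((-1) ^ n / n.factorial)) := by
  induction n with
  | zero => simpa using Complex.tendsto_self_mul_Gamma_nhds_zero
  | succ n ih =>
    have hmap : Tendsto (fun z : ℂ => z + 1) (𝓝[≠] (-((n + 1 : ℕ) : ℂ))) (𝓝[≠] (-(n : ℂ))) := by
      have h := tendsto_affine_punctured (-((n + 1 : ℕ) : ℂ)) 1 one_ne_zero 1
      have e : (1 : ℂ) + 1 * (-((n + 1 : ℕ) : ℂ)) = -(n : ℂ) := by push_cast; ring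
      rw [e] at h
      refine h.congr fun z => by ring
    have h1 := ih.comp hmap
    have h0 : (-((n + 1 : ℕ) : ℂ)) ≠ 0 := by
      exact neg_ne_zero.mpr (Nat.cast_ne_zero.mpr (Nat.succ_ne_zero n))
    have h2 : Tendsto (fun z : ℂ => z⁻¹) (𝓝[≠] (-((n + 1 : ℕ) : ℂ)))
        (𝓝 (-((n + 1 : ℕ) : ℂ))⁻¹) :=
      ((continuousAt_inv₀ h0).tendsto).mono_left nhdsWithin_le_nhds
    have h3 := h1.mul h2
    have heq : ∀ᶠ z : ℂ in 𝓝[≠] (-((n + 1 : ℕ) : ℂ)),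
        ((fun z : ℂ => (z + n) * Complex.Gamma z) ∘ fun z => z + 1) z * z⁻¹
          = (z + ((n + 1 : ℕ) : ℂ)) * Complex.Gamma z := by
      have hz0 : ∀ᶠ z : ℂ in 𝓝[≠] (-((n + 1 : ℕ) : ℂ)), z ≠ 0 := by
        refine eventually_nhdsWithin_of_eventually_nhds ?_
        exact (isOpen_compl_singleton.eventually_mem (by simpa using h0))
      filter_upwards [hz0] with z hz
      simp only [Function.comp_apply]
      rw [Complex.Gamma_add_one z hz]
      push_cast
      field_simp
      ring
    have hval : ((-1 : ℂ) ^ n / n.factorial) * (-((n + 1 : ℕ) : ℂ))⁻¹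
        = (-1) ^ (n + 1) / (n + 1).factorial := by
      have hn1 : ((n : ℂ) + 1) ≠ 0 := Nat.cast_add_one_ne_zero n
      have hf : ((n.factorial : ℂ)) ≠ 0 := Nat.cast_ne_zero.mpr n.factorial_ne_zero
      have hF : (((n + 1).factorial : ℕ) : ℂ) ≠ 0 := Nat.cast_ne_zero.mpr (n + 1).factorial_ne_zero
      rw [div_mul_eq_mul_div, div_eq_div_iff hf hF, Nat.factorial_succ, pow_succ]
      push_cast
      rw [inv_neg]
      field_simp
    rw [← hval]
    exact h3.congr' heq

lemma scalarQ (m1 m2 m3 : ℕ) :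
    ((-1 : ℚ) ^ (m2 + m3 + 1) / (m2 + m3 + 1).factorial) * m2.factorial *
      ((-1 : ℚ) ^ m3 / m3.factorial)⁻¹ *
      (-(bernoulli' (m1 + m2 + m3 + 2)) / ((m1 + m2 + m3 + 1 : ℕ) + 1)) =
      (-1 : ℚ) ^ m2 * bMT m2 m3 m1 := by
  have hch : ((m1 + m2 + m3 + 1).choose m1 * m1.factorial * (m2 + m3 + 1).factorial : ℕ)
      = (m1 + m2 + m3 + 1).factorial := by
    have h := Nat.choose_mul_factorial_mul_factorial (show m1 ≤ m1 + m2 + m3 + 1 by omega)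
    rwa [show m1 + m2 + m3 + 1 - m1 = m2 + m3 + 1 by omega] at h
  have hfs : (m1 + m2 + m3 + 2).factorial
      = (m1 + m2 + m3 + 2) * (m1 + m2 + m3 + 1).factorial := Nat.factorial_succ _
  have hinv : ((-1 : ℚ) ^ m3 / m3.factorial)⁻¹ = (-1 : ℚ) ^ m3 * m3.factorial := by
    rw [inv_div, div_eq_iff (by positivity)]
    rw [mul_assoc, mul_comm ((m3.factorial : ℚ)) _, ← mul_assoc, ← pow_add]
    rw [show m3 + m3 = 2 * m3 by ring, pow_mul]
    norm_num
  rw [hinv]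
  unfold bMT
  rw [show m2 + m3 + m1 + 1 = m1 + m2 + m3 + 1 by omega,
    show m2 + m3 + m1 + 2 = m1 + m2 + m3 + 2 by omega, hfs]
  have h1 : ((m2 + m3 + 1).factorial : ℚ) ≠ 0 := Nat.cast_ne_zero.mpr (Nat.factorial_ne_zero _)
  have h2 : ((m1 + m2 + m3 + 1).factorial : ℚ) ≠ 0 := Nat.cast_ne_zero.mpr (Nat.factorial_ne_zero _)
  have h3 : ((m1 + m2 + m3 + 2 : ℕ) : ℚ) ≠ 0 := Nat.cast_ne_zero.mpr (by omega)
  have hsign : (-1 : ℚ) ^ (m2 + m3 + 1) * (-1 : ℚ) ^ m3 = -(-1 : ℚ) ^ m2 := by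
    rw [← pow_add, show m2 + m3 + 1 + m3 = 2 * m3 + (m2 + 1) by ring, pow_add, pow_mul,
      pow_succ, pow_succ]
    ring
  have hchQ : (((m1 + m2 + m3 + 1).choose m1 : ℚ)) * m1.factorial * (m2 + m3 + 1).factorial
      = (m1 + m2 + m3 + 1).factorial := by exact_mod_cast congrArg (Nat.cast : ℕ → ℚ) hch
  have hM : ((m1 + m2 + m3 + 1 : ℕ) : ℚ) + 1 = ((m1 + m2 + m3 + 2 : ℕ) : ℚ) := by
    push_cast; ring
  rw [Nat.cast_mul, hM]
  field_simp
  have hsq : ((-1 : ℚ)) ^ (m3 * 2) = 1 := by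
    rw [mul_comm, pow_mul]; norm_num
  linear_combination (-(bernoulli' (m1 + m2 + m3 + 2) * ((m1 + m2 + m3 + 1).factorial : ℚ))) * hsign
    + (-((-1 : ℚ) ^ m2 * bernoulli' (m1 + m2 + m3 + 2))) * hchQ


theorem stmt8 (m1 m2 m3 : ℕ) (c1 c2 c3 : ℂ) (hc1 : c1 ≠ 0) (hc2 : c2 ≠ 0) (hc3 : c3 ≠ 0)
    (hc23 : c2 + c3 ≠ 0) :
    Tendsto
      (fun ε : ℂ =>
        Complex.Gamma (-(m2 : ℂ) - (m3 : ℂ) - 1 + (c2 + c3) * ε) *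
          Complex.Gamma (1 + (m2 : ℂ) - c2 * ε) *
          (1 / Complex.Gamma (-(m3 : ℂ) + c3 * ε)) *
          riemannZeta (1 - ((m1 + m2 + m3 + 2 : ℕ) : ℂ) + (c1 + c2 + c3) * ε))
      (nhdsWithin 0 {0}ᶜ)
      (nhds ((-1 : ℂ) ^ m2 * (bMT m2 m3 m1 : ℂ) * c3 / (c2 + c3))) := by
  have hA : Tendsto (fun ε : ℂ => ((c2 + c3) * ε) *
      Complex.Gamma (-((m2 + m3 + 1 : ℕ) : ℂ) + (c2 + c3) * ε)) (𝓝[≠] (0 : ℂ))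
      (𝓝 ((-1) ^ (m2 + m3 + 1) / (m2 + m3 + 1).factorial)) := by
    have hmap := tendsto_affine_punctured 0 (c2 + c3) hc23 (-((m2 + m3 + 1 : ℕ) : ℂ))
    rw [mul_zero, add_zero] at hmap
    have h := (gammaRes (m2 + m3 + 1)).comp hmap
    refine h.congr fun z => ?_
    simp only [Function.comp_apply]
    ring_nf
  have hCraw : Tendsto (fun ε : ℂ => (c3 * ε) * Complex.Gamma (-(m3 : ℂ) + c3 * ε))
      (𝓝[≠] (0 : ℂ)) (𝓝 ((-1) ^ m3 / m3.factorial)) := by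
    have hmap := tendsto_affine_punctured 0 c3 hc3 (-(m3 : ℂ))
    rw [mul_zero, add_zero] at hmap
    have h := (gammaRes m3).comp hmap
    refine h.congr fun z => ?_
    simp only [Function.comp_apply]
    ring_nf
  have hC := hCraw.inv₀ (show ((-1 : ℂ) ^ m3 / m3.factorial) ≠ 0 from
    div_ne_zero (pow_ne_zero _ (neg_ne_zero.mpr one_ne_zero))
      (Nat.cast_ne_zero.mpr (Nat.factorial_ne_zero _)))
  have hB : Tendsto (fun ε : ℂ => Complex.Gamma (1 + (m2 : ℂ) - c2 * ε)) (𝓝[≠] (0 : ℂ))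
      (𝓝 (m2.factorial : ℂ)) := by
    have hne : ∀ k : ℕ, (1 : ℂ) + m2 ≠ -k := by
      intro k h
      have := congrArg Complex.re h
      simp at this
      have h1 : (0 : ℝ) ≤ (m2 : ℝ) := Nat.cast_nonneg _
      have h2 : (0 : ℝ) ≤ (k : ℝ) := Nat.cast_nonneg _
      linarith
    have hd := ((Complex.differentiableAt_Gamma _ hne).continuousAt).tendsto
    have harg : Tendsto (fun ε : ℂ => 1 + (m2 : ℂ) - c2 * ε) (𝓝[≠] (0 : ℂ))
        (𝓝 (1 + (m2 : ℂ))) := by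
      have hcont : Continuous fun ε : ℂ => 1 + (m2 : ℂ) - c2 * ε := by continuity
      refine Tendsto.mono_left ?_ nhdsWithin_le_nhds
      simpa using hcont.tendsto 0
    have h := hd.comp harg
    rw [show (1 : ℂ) + m2 = (m2 : ℂ) + 1 by ring, Complex.Gamma_nat_eq_factorial] at h
    refine h.congr fun ε => ?_
    simp only [Function.comp_apply]
    ring_nf
  have hD : Tendsto (fun ε : ℂ => riemannZeta (1 - ((m1 + m2 + m3 + 2 : ℕ) : ℂ)
      + (c1 + c2 + c3) * ε)) (𝓝[≠] (0 : ℂ))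
      (𝓝 (riemannZeta (1 - ((m1 + m2 + m3 + 2 : ℕ) : ℂ)))) := by
    have h1 : (1 : ℂ) - ((m1 + m2 + m3 + 2 : ℕ) : ℂ) ≠ 1 := by
      intro h
      have := sub_eq_self.mp h
      exact (by omega : m1 + m2 + m3 + 2 ≠ 0) (Nat.cast_eq_zero.mp this)
    have hd := ((differentiableAt_riemannZeta h1).continuousAt).tendsto
    have harg : Tendsto (fun ε : ℂ => 1 - ((m1 + m2 + m3 + 2 : ℕ) : ℂ) + (c1 + c2 + c3) * ε)
        (𝓝[≠] (0 : ℂ)) (𝓝 (1 - ((m1 + m2 + m3 + 2 : ℕ) : ℂ))) := by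
      have hcont : Continuous fun ε : ℂ =>
          1 - ((m1 + m2 + m3 + 2 : ℕ) : ℂ) + (c1 + c2 + c3) * ε := by continuity
      refine Tendsto.mono_left ?_ nhdsWithin_le_nhds
      simpa using hcont.tendsto 0
    exact hd.comp harg
  have hprod := (((hA.mul hB).mul hC).mul hD).mul_const (c3 / (c2 + c3))
  have hzeta : riemannZeta (1 - ((m1 + m2 + m3 + 2 : ℕ) : ℂ))
      = -((bernoulli' (m1 + m2 + m3 + 2) : ℚ) : ℂ) / (((m1 + m2 + m3 + 1 : ℕ) : ℂ) + 1) := by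
    rw [show (1 : ℂ) - ((m1 + m2 + m3 + 2 : ℕ) : ℂ) = -((m1 + m2 + m3 + 1 : ℕ) : ℂ) by
      push_cast; ring]
    rw [riemannZeta_neg_nat_eq_bernoulli' (m1 + m2 + m3 + 1)]
  have hq := congrArg (fun q : ℚ => (q : ℂ)) (scalarQ m1 m2 m3)
  push_cast at hq
  have hval : (-1 : ℂ) ^ m2 * (bMT m2 m3 m1 : ℂ) * c3 / (c2 + c3)
      = (-1 : ℂ) ^ (m2 + m3 + 1) / ((m2 + m3 + 1).factorial : ℂ) * (m2.factorial : ℂ) *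
        ((-1 : ℂ) ^ m3 / (m3.factorial : ℂ))⁻¹ *
        riemannZeta (1 - ((m1 + m2 + m3 + 2 : ℕ) : ℂ)) * (c3 / (c2 + c3)) := by
    rw [hzeta]
    push_cast
    linear_combination (-(c3 / (c2 + c3))) * hq
  rw [hval]
  refine Tendsto.congr' ?_ hprod
  filter_upwards [self_mem_nhdsWithin] with ε hε
  have hε' : ε ≠ 0 := hε
  rw [show -((m2 + m3 + 1 : ℕ) : ℂ) + (c2 + c3) * ε
      = -(m2 : ℂ) - (m3 : ℂ) - 1 + (c2 + c3) * ε by push_cast; ring]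
  have hK : (c2 + c3) * ε * (c3 * ε)⁻¹ * (c3 * (c2 + c3)⁻¹) = 1 := by
    field_simp
  rw [mul_inv, one_div, div_eq_mul_inv]
  linear_combination (Complex.Gamma (-(m2 : ℂ) - (m3 : ℂ) - 1 + (c2 + c3) * ε) *
    Complex.Gamma (1 + (m2 : ℂ) - c2 * ε) * (Complex.Gamma (-(m3 : ℂ) + c3 * ε))⁻¹ *
    riemannZeta (1 - ((m1 + m2 + m3 + 2 : ℕ) : ℂ) + (c1 + c2 + c3) * ε)) * hK
end

section
/- Let m1, m2, m3 be non-negative integers and let c1, c2, c3 be nonzero complex numbers with c1 + c3 ≠ 0. Then as ε → 0 through nonzero complex numbers, the function ε ↦ ∑_{k=0}^{m1+m3+1} binom(m3 − c3 ε, k) · ζ(−m1−m3+k + (c1+c3)ε) · ζ(−m2−k + c2 ε) tends to the limit c(m1, m2; m3) + (−1)^{m1}·b(m3, m1; m2)·c3/(c1+c3), where ζ is the (analytically continued) Riemann zeta function. -/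
open Finset Complex Filter
open scoped Topology

/-- `c(a, b; d) = ∑_{n1+n2=d} C(d, n1)·(B_{a+n1+1}/(a+n1+1))·(B_{b+n2+1}/(b+n2+1))`. -/
def cMT (a b d : ℕ) : ℚ :=
  ∑ n1 ∈ Finset.range (d + 1),
    (d.choose n1 : ℚ) * (bernoulli' (a + n1 + 1) / (a + n1 + 1)) *
      (bernoulli' (b + (d - n1) + 1) / (b + (d - n1) + 1))

/-- The generalized binomial coefficient `binom(z, k) = (∏_{i=0}^{k−1} (z − i))/k!`. -/
noncomputable def cbinom (z : ℂ) (k : ℕ) : ℂ :=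
  (∏ i ∈ Finset.range k, (z - i)) / (k.factorial : ℂ)

lemma prod_range_sub_cast (n k : ℕ) :
    ∏ i ∈ Finset.range k, ((n : ℂ) - (i : ℂ)) = (n.descFactorial k : ℂ) := by
  induction k with
  | zero => simp
  | succ k ih =>
    rw [Finset.prod_range_succ, ih, Nat.descFactorial_succ, Nat.cast_mul]
    rcases le_or_gt k n with h | h
    · rw [Nat.cast_sub h]; ring
    · rw [Nat.descFactorial_eq_zero_iff_lt.mpr h]; simp

lemma cbinom_nat (n k : ℕ) : cbinom (n : ℂ) k = (n.choose k : ℂ) := by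
  rw [cbinom, prod_range_sub_cast, Nat.descFactorial_eq_factorial_mul_choose]
  push_cast
  rw [mul_comm, mul_div_assoc, div_self (by exact_mod_cast k.factorial_ne_zero), mul_one]

lemma neg_natCast_ne_one (n : ℕ) : -(n : ℂ) ≠ 1 := by
  intro h
  have h2 := congrArg Complex.re h
  simp only [Complex.neg_re, Complex.natCast_re, Complex.one_re] at h2
  have : (0:ℝ) ≤ (n:ℝ) := Nat.cast_nonneg n
  linarith

lemma prod_range_add_one (n : ℕ) : ∏ i ∈ Finset.range n, ((i:ℂ)+1) = (n.factorial : ℂ) := by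
  induction n with
  | zero => simp
  | succ n ih => rw [Finset.prod_range_succ, ih, Nat.factorial_succ]; push_cast; ring

lemma cMT_reflect (m1 m2 m3 : ℕ) :
    cMT m1 m2 m3 = ∑ k ∈ Finset.range (m3+1),
      (m3.choose k : ℚ) * (bernoulli' (m1 + m3 - k + 1) / ((m1 + m3 - k + 1 : ℕ) : ℚ)) *
        (bernoulli' (m2 + k + 1) / ((m2 + k + 1 : ℕ) : ℚ)) := by
  rw [cMT, ← Finset.sum_range_reflect]
  apply Finset.sum_congr rfl
  intro k hk
  have hk' : k ≤ m3 := by simpa [Nat.lt_succ_iff] using hk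
  have h1 : m3 + 1 - 1 - k = m3 - k := by omega
  have h2 : m1 + (m3 - k) + 1 = m1 + m3 - k + 1 := by omega
  have h3 : m2 + (m3 - (m3 - k)) + 1 = m2 + k + 1 := by omega
  rw [h1, Nat.choose_symm hk']
  have h4 : k ≤ m1 + m3 := by omega
  have hc : m3 - (m3 - k) = k := by omega
  simp only [h2, h3, hc]
  push_cast [Nat.cast_sub hk', Nat.cast_sub h4]
  ring

lemma sum_eq_cMT (m1 m2 m3 : ℕ) :
    ∑ k ∈ Finset.range (m1 + m3 + 1),
      cbinom ((m3:ℂ)) k * riemannZeta (-(m1:ℂ) - (m3:ℂ) + (k:ℂ)) * riemannZeta (-(m2:ℂ) - (k:ℂ))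
      = ((cMT m1 m2 m3 : ℚ) : ℂ) := by
  rw [cMT_reflect, Rat.cast_sum,
    ← Finset.sum_subset (show Finset.range (m3+1) ⊆ Finset.range (m1+m3+1) from
      Finset.range_subset_range.mpr (by omega))]
  · apply Finset.sum_congr rfl
    intro k hk
    have hk' : k ≤ m3 := Nat.lt_succ_iff.mp (Finset.mem_range.mp hk)
    have h4 : k ≤ m1 + m3 := by omega
    have ha : -(m1:ℂ) - (m3:ℂ) + (k:ℂ) = -(((m1+m3-k : ℕ)):ℂ) := by
      push_cast [Nat.cast_sub h4]; ring
    have hb : -(m2:ℂ) - (k:ℂ) = -(((m2+k : ℕ)):ℂ) := by push_cast; ring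
    rw [cbinom_nat, ha, hb, riemannZeta_neg_nat_eq_bernoulli', riemannZeta_neg_nat_eq_bernoulli']
    push_cast [Nat.cast_sub h4]
    ring
  · intro k hk hk'
    rw [cbinom_nat, Nat.choose_eq_zero_of_lt
      (by simp only [Finset.mem_range] at hk hk' ⊢; omega)]
    simp

lemma tendsto_affine (a c : ℂ) : Tendsto (fun ε : ℂ => a + c * ε) (𝓝[≠] 0) (𝓝 a) := by
  have h : Continuous fun ε : ℂ => a + c * ε := by continuity
  simpa using (h.tendsto 0).mono_left nhdsWithin_le_nhds

lemma tendsto_partA (m1 m2 m3 : ℕ) (c1 c2 c3 : ℂ) :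
    Tendsto (fun ε : ℂ => ∑ k ∈ Finset.range (m1+m3+1),
        cbinom ((m3:ℂ) - c3*ε) k * riemannZeta (-(m1:ℂ) - (m3:ℂ) + (k:ℂ) + (c1+c3)*ε) *
          riemannZeta (-(m2:ℂ) - (k:ℂ) + c2*ε))
      (𝓝[≠] (0:ℂ)) (𝓝 (((cMT m1 m2 m3 : ℚ) : ℂ))) := by
  rw [← sum_eq_cMT m1 m2 m3]
  apply tendsto_finset_sum
  intro k hk
  have hk' : k ≤ m1 + m3 := Nat.lt_succ_iff.mp (Finset.mem_range.mp hk)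
  have ha : -(m1:ℂ) - (m3:ℂ) + (k:ℂ) ≠ 1 := by
    rw [show -(m1:ℂ) - (m3:ℂ) + (k:ℂ) = -(((m1+m3-k:ℕ)):ℂ) by
      push_cast [Nat.cast_sub hk']; ring]
    exact neg_natCast_ne_one _
  have hb : -(m2:ℂ) - (k:ℂ) ≠ 1 := by
    rw [show -(m2:ℂ) - (k:ℂ) = -(((m2+k:ℕ)):ℂ) by push_cast; ring]
    exact neg_natCast_ne_one _
  have t1 : Tendsto (fun ε : ℂ => cbinom ((m3:ℂ) - c3*ε) k) (𝓝[≠](0:ℂ))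
      (𝓝 (cbinom (m3:ℂ) k)) := by
    have hcont : Continuous fun ε : ℂ => cbinom ((m3:ℂ) - c3*ε) k := by
      unfold cbinom
      exact (continuous_finset_prod _ fun i _ =>
        (continuous_const.sub (continuous_const.mul continuous_id)).sub
          continuous_const).div_const _
    simpa using (hcont.tendsto 0).mono_left (nhdsWithin_le_nhds (s := {(0:ℂ)}ᶜ))
  have t2 : Tendsto (fun ε : ℂ => riemannZeta (-(m1:ℂ) - (m3:ℂ) + (k:ℂ) + (c1+c3)*ε))
      (𝓝[≠](0:ℂ)) (𝓝 (riemannZeta (-(m1:ℂ) - (m3:ℂ) + (k:ℂ)))) :=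
    ((differentiableAt_riemannZeta ha).continuousAt.tendsto).comp (tendsto_affine _ _)
  have t3 : Tendsto (fun ε : ℂ => riemannZeta (-(m2:ℂ) - (k:ℂ) + c2*ε))
      (𝓝[≠](0:ℂ)) (𝓝 (riemannZeta (-(m2:ℂ) - (k:ℂ)))) :=
    ((differentiableAt_riemannZeta hb).continuousAt.tendsto).comp (tendsto_affine _ _)
  exact (t1.mul t2).mul t3

lemma bMT_fact (m1 m2 m3 : ℕ) :
    bMT m3 m1 m2 = (m3.factorial : ℚ) * m1.factorial * bernoulli' (m1+m2+m3+2) /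
      ((m1+m3+1).factorial * (m1+m2+m3+2)) := by
  have hle : m2 ≤ m3 + m1 + m2 + 1 := by omega
  have hch := Nat.choose_mul_factorial_mul_factorial hle
  rw [show m3 + m1 + m2 + 1 - m2 = m1 + m3 + 1 from by omega] at hch
  have hch' : ((m3+m1+m2+1).choose m2 : ℚ) * m2.factorial * (m1+m3+1).factorial
      = (m3+m1+m2+1).factorial := by exact_mod_cast congrArg (Nat.cast (R := ℚ)) hch
  rw [bMT]
  rw [show m3 + m1 + m2 + 2 = m1 + m2 + m3 + 2 from by omega,
    show (m1 + m2 + m3 + 2).factorial = (m1+m2+m3+2) * (m3+m1+m2+1).factorial from by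
      rw [show m1 + m2 + m3 + 2 = (m3+m1+m2+1) + 1 from by omega, Nat.factorial_succ]]
  have hf1 : ((m1+m3+1).factorial : ℚ) ≠ 0 := by exact_mod_cast (m1+m3+1).factorial_ne_zero
  have hf2 : ((m3+m1+m2+1).factorial : ℚ) ≠ 0 := by exact_mod_cast (m3+m1+m2+1).factorial_ne_zero
  have hf3 : (m2.factorial : ℚ) ≠ 0 := by exact_mod_cast m2.factorial_ne_zero
  have hm : (m1+m2+m3+2 : ℚ) ≠ 0 := by positivity
  push_cast at hch' ⊢
  field_simp
  linear_combination (bernoulli' (m1+m2+m3+2)) * hch'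

lemma zeta_pole (c : ℂ) (hc : c ≠ 0) :
    Tendsto (fun ε : ℂ => ε * riemannZeta (1 + c * ε)) (𝓝[≠] (0:ℂ)) (𝓝 (1/c)) := by
  have hmap : Tendsto (fun ε : ℂ => 1 + c * ε) (𝓝[≠] (0:ℂ)) (𝓝[≠] (1:ℂ)) := by
    rw [tendsto_nhdsWithin_iff]
    refine ⟨tendsto_affine 1 c, ?_⟩
    filter_upwards [self_mem_nhdsWithin] with x hx
    simp only [Set.mem_compl_iff, Set.mem_singleton_iff] at hx ⊢
    intro h
    exact hx (by
      have : c * x = 0 := by linear_combination h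
      exact (mul_eq_zero.mp this).resolve_left hc)
  have h1 := riemannZeta_residue_one.comp hmap
  have h2 := h1.const_mul (c⁻¹)
  have h3 : Tendsto (fun ε : ℂ => ε * riemannZeta (1 + c * ε)) (𝓝[≠] (0:ℂ)) (𝓝 (c⁻¹ * 1)) := by
    refine Tendsto.congr (fun ε => ?_) h2
    simp only [Function.comp]
    field_simp
    ring
  simpa [one_div] using h3

lemma tendsto_partB (m1 m2 m3 : ℕ) (c1 c2 c3 : ℂ) (hc13 : c1 + c3 ≠ 0) :
    Tendsto (fun ε : ℂ =>
        cbinom ((m3:ℂ) - c3*ε) (m1+m3+1) *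
          riemannZeta (-(m1:ℂ) - (m3:ℂ) + ((m1+m3+1 : ℕ):ℂ) + (c1+c3)*ε) *
          riemannZeta (-(m2:ℂ) - ((m1+m3+1 : ℕ):ℂ) + c2*ε))
      (𝓝[≠] (0:ℂ))
      (𝓝 ((-1:ℂ)^m1 * ((bMT m3 m1 m2 : ℚ):ℂ) * c3 / (c1+c3))) := by
  set A : ℂ → ℂ := fun ε => ∏ i ∈ Finset.range m3, ((m3:ℂ) - c3*ε - (i:ℂ)) with hA
  set B : ℂ → ℂ := fun ε => ∏ i ∈ Finset.Ico (m3+1) (m1+m3+1), ((m3:ℂ) - c3*ε - (i:ℂ)) with hB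
  -- limits of A and B
  have tA : Tendsto A (𝓝[≠] (0:ℂ)) (𝓝 ((m3.factorial : ℂ))) := by
    have hcont : Continuous A := by
      rw [hA]
      exact continuous_finset_prod _ fun i _ =>
        (continuous_const.sub (continuous_const.mul continuous_id)).sub continuous_const
    have hA0 : A 0 = (m3.factorial : ℂ) := by
      rw [hA]
      simp only [mul_zero, sub_zero]
      rw [prod_range_sub_cast, Nat.descFactorial_self]
    rw [← hA0]
    exact (hcont.tendsto 0).mono_left (nhdsWithin_le_nhds (s := {(0:ℂ)}ᶜ))
  have tB : Tendsto B (𝓝[≠] (0:ℂ)) (𝓝 ((-1:ℂ)^m1 * (m1.factorial : ℂ))) := by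
    have hcont : Continuous B := by
      rw [hB]
      exact continuous_finset_prod _ fun i _ =>
        (continuous_const.sub (continuous_const.mul continuous_id)).sub continuous_const
    have hB0 : B 0 = (-1:ℂ)^m1 * (m1.factorial : ℂ) := by
      rw [hB]
      simp only [mul_zero, sub_zero]
      rw [Finset.prod_Ico_eq_prod_range, show m1 + m3 + 1 - (m3+1) = m1 from by omega]
      rw [show (∏ i ∈ Finset.range m1, ((m3:ℂ) - ((m3+1+i : ℕ):ℂ)))
          = ∏ i ∈ Finset.range m1, ((-1 : ℂ) * ((i:ℂ)+1)) from
        Finset.prod_congr rfl fun i _ => by push_cast; ring]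
      rw [Finset.prod_mul_distrib, Finset.prod_const, prod_range_add_one, Finset.card_range]
    rw [← hB0]
    exact (hcont.tendsto 0).mono_left (nhdsWithin_le_nhds (s := {(0:ℂ)}ᶜ))
  have hZarg : -(m2:ℂ) - ((m1+m3+1 : ℕ):ℂ) = -(((m2+(m1+m3+1) : ℕ)):ℂ) := by
    push_cast; ring
  have tZ2 : Tendsto (fun ε : ℂ => riemannZeta (-(m2:ℂ) - ((m1+m3+1 : ℕ):ℂ) + c2*ε))
      (𝓝[≠] (0:ℂ)) (𝓝 (riemannZeta (-(m2:ℂ) - ((m1+m3+1 : ℕ):ℂ)))) :=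
    ((differentiableAt_riemannZeta (by rw [hZarg]; exact neg_natCast_ne_one _)
      ).continuousAt.tendsto).comp (tendsto_affine _ _)
  have tP := zeta_pole (c1+c3) hc13
  have T := (((tA.mul tB).mul tP).mul tZ2).const_mul (-c3 / ((m1+m3+1).factorial : ℂ))
  have hval : -c3 / ((m1+m3+1).factorial : ℂ) *
      ((m3.factorial : ℂ) * ((-1:ℂ)^m1 * (m1.factorial : ℂ)) * (1/(c1+c3)) *
        riemannZeta (-(m2:ℂ) - ((m1+m3+1 : ℕ):ℂ)))
      = (-1:ℂ)^m1 * ((bMT m3 m1 m2 : ℚ):ℂ) * c3 / (c1+c3) := by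
    rw [hZarg, riemannZeta_neg_nat_eq_bernoulli', bMT_fact]
    have hf : ((m1+m3+1).factorial : ℂ) ≠ 0 := by exact_mod_cast (m1+m3+1).factorial_ne_zero
    have hm : ((m2+(m1+m3+1) : ℕ) : ℂ) + 1 ≠ 0 := by
      exact_mod_cast (Nat.cast_add_one_ne_zero (R := ℂ) (m2+(m1+m3+1)))
    rw [show m2 + (m1+m3+1) + 1 = m1+m2+m3+2 from by omega]
    push_cast
    field_simp
    ring
  rw [← hval]
  refine Tendsto.congr (fun ε => ?_) T
  rw [cbinom, show -(m1:ℂ) - (m3:ℂ) + ((m1+m3+1 : ℕ):ℂ) + (c1+c3)*ε = 1 + (c1+c3)*ε from by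
    push_cast; ring]
  rw [← Finset.prod_range_mul_prod_Ico _ (show m3+1 ≤ m1+m3+1 from by omega),
    Finset.prod_range_succ]
  rw [hA, hB]
  push_cast
  ring

theorem stmt9 (m1 m2 m3 : ℕ) (c1 c2 c3 : ℂ) (hc1 : c1 ≠ 0) (hc2 : c2 ≠ 0) (hc3 : c3 ≠ 0)
    (hc13 : c1 + c3 ≠ 0) :
    Tendsto
      (fun ε : ℂ =>
        ∑ k ∈ Finset.range (m1 + m3 + 2),
          cbinom ((m3 : ℂ) - c3 * ε) k *
            riemannZeta (-(m1 : ℂ) - (m3 : ℂ) + (k : ℂ) + (c1 + c3) * ε) *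
            riemannZeta (-(m2 : ℂ) - (k : ℂ) + c2 * ε))
      (nhdsWithin 0 {0}ᶜ)
      (nhds ((cMT m1 m2 m3 : ℂ) + (-1 : ℂ) ^ m1 * (bMT m3 m1 m2 : ℂ) * c3 / (c1 + c3))) := by
  have hA := tendsto_partA m1 m2 m3 c1 c2 c3
  have hB := tendsto_partB m1 m2 m3 c1 c2 c3 hc13
  have h := hA.add hB
  refine Tendsto.congr (fun ε => ?_) h
  rw [← Finset.sum_range_succ (fun k =>
    cbinom ((m3 : ℂ) - c3 * ε) k *
      riemannZeta (-(m1 : ℂ) - (m3 : ℂ) + (k : ℂ) + (c1 + c3) * ε) *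
      riemannZeta (-(m2 : ℂ) - (k : ℂ) + c2 * ε)) (m1+m3+1)]
end

section
/- Let p be a prime and let a, k be non-negative integers. Then in ℤ/pℤ the following identity holds: ∑_{n1,n3 ≥ 1, n1+n3 ≤ p−1} n1^{a} · ((n3)^{−1})^{k} = (−1)^{k} · ∑_{1 ≤ m1 < m2 ≤ p−1} m1^{a} · ((m2)^{−1})^{k}, where (x)^{−1} denotes the multiplicative inverse in ℤ/pℤ. (Equivalently, the finite multiple omega value satisfies ω_𝒜(−a, 0, k) = (−1)^k ζ_𝒜(−a, k) prime by prime.) -/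
open Finset

theorem stmt10 (p : ℕ) (hp : p.Prime) (a k : ℕ) :
    (∑ n1 ∈ Finset.Ico 1 p, ∑ n3 ∈ Finset.Ico 1 (p - n1),
        (n1 : ZMod p) ^ a * ((n3 : ZMod p)⁻¹) ^ k) =
      (-1 : ZMod p) ^ k *
        ∑ m2 ∈ Finset.range p, ∑ m1 ∈ Finset.Ico 1 m2,
          (m1 : ZMod p) ^ a * ((m2 : ZMod p)⁻¹) ^ k := by
  haveI := Fact.mk hp
  rw [Finset.mul_sum]
  simp_rw [Finset.mul_sum]
  rw [Finset.sum_sigma', Finset.sum_sigma']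
  refine Finset.sum_nbij' (fun x => ⟨p - x.2, x.1⟩) (fun x => ⟨x.2, p - x.1⟩)
    ?_ ?_ ?_ ?_ ?_
  · rintro ⟨n1, n3⟩ h
    simp only [Finset.mem_sigma, Finset.mem_Ico, Finset.mem_range] at h ⊢
    omega
  · rintro ⟨m2, m1⟩ h
    simp only [Finset.mem_sigma, Finset.mem_Ico, Finset.mem_range] at h ⊢
    omega
  · rintro ⟨n1, n3⟩ h
    simp only [Finset.mem_sigma, Finset.mem_Ico] at h
    obtain ⟨⟨h1, h2⟩, h3, h4⟩ := h
    simp only [Sigma.mk.inj_iff, heq_eq_eq, true_and, and_true, eq_self_iff_true]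
    omega
  · rintro ⟨m2, m1⟩ h
    simp only [Finset.mem_sigma, Finset.mem_Ico, Finset.mem_range] at h
    obtain ⟨h1, h2, h3⟩ := h
    simp only [Sigma.mk.inj_iff, heq_eq_eq, true_and, and_true, eq_self_iff_true]
    omega
  · rintro ⟨n1, n3⟩ h
    simp only [Finset.mem_sigma, Finset.mem_Ico] at h
    have h3 : n3 ≤ p := by omega
    have hcast : ((p - n3 : ℕ) : ZMod p) = -(n3 : ZMod p) := by
      push_cast [Nat.cast_sub h3, CharP.cast_eq_zero]
      ring
    simp only [hcast]
    rw [inv_neg, neg_pow]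
    ring_nf
    rw [pow_mul', neg_one_sq, one_pow, mul_one]
end
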